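/- Let A be an indecomposable GCM of affine or indefinite type, and set T_reg = {Z ∈ Xreg : Z(λ) ∈ ℍ for all λ ∈ I₀}. For Z ∈ T_reg the phase φ^I(Z) has a unique representative in (0,1), and the homotopy h : [0,1] × T_reg → T_reg, h_t(Z) = e^{iπt(1/2 − φ^I(Z))}·Z, is continuous, satisfies h_0 = id, h_1(T_reg) = Xreg^N, and h_t = id on Xreg^N for all t. In particular, Xreg^N is a deformation retract of T_reg and the inclusion Xreg^N ↪ T_reg is a homotopy equivalence. -/

import Mathlib

open scoped BigOperators

noncomputable section

namespace KacMoodyStab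

variable {ι : Type*} [Fintype ι] [DecidableEq ι]

/-- A symmetric generalized Cartan matrix: symmetric, `2` on the diagonal,
non-positive integers off the diagonal. -/
def IsGCM (A : Matrix ι ι ℤ) : Prop :=
  A.IsSymm ∧ (∀ i, A i i = 2) ∧ ∀ i j, i ≠ j → A i j ≤ 0

/-- The simple root `α i` in the root lattice `L = ι → ℤ`. -/
def sroot (i : ι) : ι → ℤ := Pi.single i 1

/-- The symmetric bilinear form `(x, y) = ∑ i j, x i * A i j * y j` on the root lattice. -/
def bform (A : Matrix ι ι ℤ) (x y : ι → ℤ) : ℤ := ∑ i, ∑ j, x i * A i j * y j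

/-- The linear functional `λ ↦ (λ, α i)`. -/
def corootFn (A : Matrix ι ι ℤ) (i : ι) : (ι → ℤ) →ₗ[ℤ] ℤ where
  toFun x := ∑ j, x j * A j i
  map_add' x y := by simp [add_mul, Finset.sum_add_distrib]
  map_smul' c x := by simp [Finset.mul_sum, mul_assoc]

lemma corootFn_sroot (A : Matrix ι ι ℤ) (hA : IsGCM A) (i : ι) :
    corootFn A i (sroot i) = 2 := by
  have h : ∀ j, (sroot i) j * A j i = if j = i then A j i else 0 := by
    intro j
    by_cases h : j = i <;> simp [sroot, Pi.single_apply, h]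
  have : corootFn A i (sroot i) = ∑ j, (sroot i) j * A j i := rfl
  rw [this]
  simp [h, hA.2.1 i]

/-- The simple reflection `r i : λ ↦ λ - (λ, α i) α i` as a `ℤ`-linear automorphism
of the root lattice. -/
def srefl (A : Matrix ι ι ℤ) (hA : IsGCM A) (i : ι) : (ι → ℤ) ≃ₗ[ℤ] (ι → ℤ) :=
  Module.reflection (corootFn_sroot A hA i)

/-- The Weyl group, the subgroup of automorphisms of the root lattice generated by the
simple reflections. -/
def weylGroup (A : Matrix ι ι ℤ) (hA : IsGCM A) : Subgroup ((ι → ℤ) ≃ₗ[ℤ] (ι → ℤ)) :=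
  Subgroup.closure (Set.range (srefl A hA))

/-- The set of real roots: the orbit of the simple roots under the Weyl group. -/
def realRoots (A : Matrix ι ι ℤ) (hA : IsGCM A) : Set (ι → ℤ) :=
  {α | ∃ w ∈ weylGroup A hA, ∃ i, α = w (sroot i)}

/-- The set of positive real roots. -/
def posRealRoots (A : Matrix ι ι ℤ) (hA : IsGCM A) : Set (ι → ℤ) :=
  realRoots A hA ∩ {α | ∀ i, 0 ≤ α i}

/-- The Dynkin diagram of a (symmetric) GCM: distinct `i`, `j` are adjacent
iff `A i j < 0`. -/
def dynkin (A : Matrix ι ι ℤ) : SimpleGraph ι where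
  Adj i j := i ≠ j ∧ (A i j < 0 ∨ A j i < 0)
  symm := ⟨fun i j h => ⟨h.1.symm, h.2.symm⟩⟩
  loopless := ⟨fun i h => h.1 rfl⟩

/-- The fundamental set `K` of positive imaginary roots: non-zero, non-negative,
connected support, and `(α, α i) ≤ 0` for all `i`. -/
def fundamentalSet (A : Matrix ι ι ℤ) : Set (ι → ℤ) :=
  {α | (∀ i, 0 ≤ α i) ∧ α ≠ 0 ∧
    ((dynkin A).induce {i | α i ≠ 0}).Connected ∧
    ∀ i, bform A α (sroot i) ≤ 0}

/-- The set of positive imaginary roots: the orbit of the fundamental set under the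
Weyl group. -/
def posImRoots (A : Matrix ι ι ℤ) (hA : IsGCM A) : Set (ι → ℤ) :=
  {β | ∃ w ∈ weylGroup A hA, ∃ α ∈ fundamentalSet A, β = w α}

/-- The set of all roots `Δ = Δ^re ∪ Δ^im`. -/
def allRoots (A : Matrix ι ι ℤ) (hA : IsGCM A) : Set (ι → ℤ) :=
  realRoots A hA ∪ (posImRoots A hA ∪ {α | -α ∈ posImRoots A hA})

/-- The canonical embedding of the root lattice into `V*_ℝ = L ⊗ ℝ = ι → ℝ`. -/
def castR (α : ι → ℤ) : ι → ℝ := fun i => (α i : ℝ)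

/-- The imaginary cone: the closure of the convex hull of `Δ^im_+ ∪ {0}` in `V*_ℝ`. -/
def imCone (A : Matrix ι ι ℤ) (hA : IsGCM A) : Set (ι → ℝ) :=
  closure (convexHull ℝ (insert 0 (castR '' posImRoots A hA)))

/-- The pairing of `Z ∈ V = Hom_ℤ(L, ℂ)` (recorded by its values `Z i = Z(α i)`)
with an element of `V*_ℝ`, via the `ℝ`-linear extension of `Z`. -/
def pairC (Z : ι → ℂ) (l : ι → ℝ) : ℂ := ∑ i, Z i * (l i : ℂ)

/-- The pairing of `Z ∈ V = Hom_ℤ(L, ℂ)` with an element of the root lattice. -/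
def pairCZ (Z : ι → ℂ) (α : ι → ℤ) : ℂ := ∑ i, Z i * (α i : ℂ)

/-- The pairing of `Z ∈ V_ℝ = Hom_ℤ(L, ℝ)` with an element of `V*_ℝ`. -/
def pairR (Z : ι → ℝ) (l : ι → ℝ) : ℝ := ∑ i, Z i * l i

/-- The set `X = V \ ∪_{λ ∈ I₀} H_λ`. -/
def Xset (A : Matrix ι ι ℤ) (hA : IsGCM A) : Set (ι → ℂ) :=
  {Z | ∀ l ∈ imCone A hA \ {0}, pairC Z l ≠ 0}

/-- The regular subset `Xreg = X \ ∪_{α ∈ Δ^re_+} H_α`. -/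
def Xreg (A : Matrix ι ι ℤ) (hA : IsGCM A) : Set (ι → ℂ) :=
  Xset A hA ∩ {Z | ∀ α ∈ posRealRoots A hA, pairCZ Z α ≠ 0}

/-- The sector `{r e^{iπφ} : r > 0, φ₁ ≤ φ ≤ φ₂}` in `ℂ`. -/
def sector (φ₁ φ₂ : ℝ) : Set ℂ :=
  {z | ∃ r : ℝ, 0 < r ∧ ∃ φ : ℝ, φ₁ ≤ φ ∧ φ ≤ φ₂ ∧
    z = (r : ℂ) * Complex.exp (Real.pi * φ * Complex.I)}

/-- The contragredient action of a lattice automorphism `w` on `V = Hom_ℤ(L, ℂ)`: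
`(w·Z)(α i) = Z(w⁻¹ α i)`. -/
def actC (w : (ι → ℤ) ≃ₗ[ℤ] (ι → ℤ)) (Z : ι → ℂ) : ι → ℂ :=
  fun i => ∑ j, Z j * ((w.symm (sroot i)) j : ℂ)

/-- The contragredient action of a lattice automorphism `w` on `V_ℝ = Hom_ℤ(L, ℝ)`:
`(w·Z)(α i) = Z(w⁻¹ α i)`. -/
def actR (w : (ι → ℤ) ≃ₗ[ℤ] (ι → ℤ)) (Z : ι → ℝ) : ι → ℝ :=
  fun i => ∑ j, Z j * ((w.symm (sroot i)) j : ℝ)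

/-- The `ℝ`-linear extension of a lattice automorphism `w` to `V*_ℝ = L ⊗ ℝ`. -/
def extR (w : (ι → ℤ) ≃ₗ[ℤ] (ι → ℤ)) (l : ι → ℝ) : ι → ℝ :=
  fun i => ∑ j, ((w (sroot j)) i : ℝ) * l j

/-- Finite type for a GCM (Kac's condition (Fin)). -/
def IsFiniteType (A : Matrix ι ι ℤ) : Prop :=
  A.det ≠ 0 ∧
  (∃ u : ι → ℝ, (∀ i, 0 < u i) ∧ ∀ i, 0 < (A.map (Int.cast : ℤ → ℝ)).mulVec u i) ∧
  ∀ u : ι → ℝ, (∀ i, 0 ≤ (A.map (Int.cast : ℤ → ℝ)).mulVec u i) →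
    (∀ i, 0 < u i) ∨ u = 0

/-- The (open) Weyl chamber `C_ℝ` in `V_ℝ`. -/
def weylChamber : Set (ι → ℝ) := {Z | ∀ i, 0 < Z i}

/-- The closed Weyl chamber in `V_ℝ`. -/
def weylChamberCl : Set (ι → ℝ) := {Z | ∀ i, 0 ≤ Z i}

/-- The Tits cone `T_ℝ = ∪_{w ∈ W} w(C̄_ℝ)`. -/
def titsCone (A : Matrix ι ι ℤ) (hA : IsGCM A) : Set (ι → ℝ) :=
  ⋃ w ∈ weylGroup A hA, actR w '' (weylChamberCl (ι := ι))

/-- The regular part of the Tits cone `T_{ℝ,reg} = ∪_{w ∈ W} w(C_ℝ)`. -/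
def titsConeReg (A : Matrix ι ι ℤ) (hA : IsGCM A) : Set (ι → ℝ) :=
  ⋃ w ∈ weylGroup A hA, actR w '' (weylChamber (ι := ι))

/-- The normalized regular subset `Xreg^N = {Z ∈ Xreg : φ^I(Z) = 1/2}`:
the image `Z(I₀)` is a sector `{r e^{iπφ} : r > 0, φ₁ ≤ φ ≤ φ₂}` with
`φ₂ - φ₁ < 1` and midpoint `(φ₁ + φ₂)/2 = 1/2`. -/
def XregN (A : Matrix ι ι ℤ) (hA : IsGCM A) : Set (ι → ℂ) :=
  {Z | Z ∈ Xreg A hA ∧ ∃ φ₁ φ₂ : ℝ, φ₁ ≤ φ₂ ∧ φ₂ - φ₁ < 1 ∧ φ₁ + φ₂ = 1 ∧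
    pairC Z '' (imCone A hA \ {0}) = sector φ₁ φ₂}

/-- The semi-closed upper half-plane `H = ℍ ∪ ℝ_{<0}`. -/
def semiClosedH : Set ℂ := {z | 0 < z.im} ∪ {z | z.im = 0 ∧ z.re < 0}

/-- The normalized complexified Weyl chamber
`C^N = {Z ∈ Xreg^N : Z(α i) ∈ H for all i}`. -/
def CN (A : Matrix ι ι ℤ) (hA : IsGCM A) : Set (ι → ℂ) :=
  {Z | Z ∈ XregN A hA ∧ ∀ i, Z i ∈ semiClosedH}

/-- The regular subset of the complexified Tits cone:
`T_reg = {Z ∈ Xreg : Z(I₀) ⊆ ℍ}`. -/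
def Treg (A : Matrix ι ι ℤ) (hA : IsGCM A) : Set (ι → ℂ) :=
  {Z | Z ∈ Xreg A hA ∧ ∀ l ∈ imCone A hA \ {0}, 0 < (pairC Z l).im}

open Classical in
/-- The phase `φ^I(Z)` of the imaginary cone with respect to `Z`, normalized by its
representative with `0 < φ₁`, `φ₂ < 1` (which exists and is unique when `Z(I₀) ⊆ ℍ`). -/
def phaseI (A : Matrix ι ι ℤ) (hA : IsGCM A) (Z : ι → ℂ) : ℝ :=
  if h : ∃ p : ℝ × ℝ, p.1 ≤ p.2 ∧ p.2 - p.1 < 1 ∧ 0 < p.1 ∧ p.2 < 1 ∧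
      pairC Z '' (imCone A hA \ {0}) = sector p.1 p.2
  then (h.choose.1 + h.choose.2) / 2 else 0

/-- The retraction `h_t(Z) = e^{iπt(1/2 - φ^I(Z))} · Z`. -/
def hRetract (A : Matrix ι ι ℤ) (hA : IsGCM A) (t : ℝ) (Z : ι → ℂ) : ι → ℂ :=
  Complex.exp (Real.pi * t * (1 / 2 - phaseI A hA Z) * Complex.I) • Z

/-- The wall `W_{i,+}`. -/
def wallPlus (A : Matrix ι ι ℤ) (hA : IsGCM A) (i : ι) : Set (ι → ℂ) :=
  {Z | Z ∈ XregN A hA ∧ ((Z i).im = 0 ∧ 0 < (Z i).re) ∧ ∀ j, j ≠ i → 0 < (Z j).im}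

/-- The wall `W_{i,-}`. -/
def wallMinus (A : Matrix ι ι ℤ) (hA : IsGCM A) (i : ι) : Set (ι → ℂ) :=
  {Z | Z ∈ XregN A hA ∧ ((Z i).im = 0 ∧ (Z i).re < 0) ∧ ∀ j, j ≠ i → 0 < (Z j).im}

/-- The defining relations of the Artin group attached to a symmetric GCM:
`σ i σ j = σ j σ i` if `a i j = 0` and `σ i σ j σ i = σ j σ i σ j` if `a i j = -1`. -/
def artinRels (A : Matrix ι ι ℤ) : Set (FreeGroup ι) :=
  {r | ∃ i j : ι,
    (A i j = 0 ∧ r = FreeGroup.of i * FreeGroup.of j *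
      (FreeGroup.of j * FreeGroup.of i)⁻¹) ∨
    (A i j = -1 ∧ r = FreeGroup.of i * FreeGroup.of j * FreeGroup.of i *
      (FreeGroup.of j * FreeGroup.of i * FreeGroup.of j)⁻¹)}

/-- The Artin group attached to a symmetric GCM. -/
def ArtinGroup (A : Matrix ι ι ℤ) := PresentedGroup (artinRels A)

instance (A : Matrix ι ι ℤ) : Group (ArtinGroup A) :=
  inferInstanceAs (Group (PresentedGroup (artinRels A)))

lemma IsGCM.submatrix {κ : Type*} [Fintype κ] [DecidableEq κ] {A : Matrix ι ι ℤ}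
    (hA : IsGCM A) (f : κ → ι) (hf : Function.Injective f) :
    IsGCM (A.submatrix f f) :=
  ⟨hA.1.submatrix f, fun i => hA.2.1 (f i),
    fun i j hij => hA.2.2 _ _ fun h => hij (hf h)⟩

/-!
For `Z ∈ T_reg` the set `Z(I₀)` is a convex cone in the open upper half-plane, and its arguments are
those of `Z` on the compact set `I ∩ S¹`. Hence `Z(I₀)` is the closed sector between the least and
the greatest of these arguments, and `φ^I(Z)` is their mean, which depends continuously on `Z`
because the extrema of a jointly continuous function over a compact set do. Multiplying `Z` by
`e^{iπδ}` rotates the sector by `πδ`, so `h_t` moves its midpoint linearly from `φ^I(Z)` to `1/2`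
without leaving the upper half-plane.

The only input from Kac–Moody theory is `I₀ ≠ ∅`. Since `A` is non-positive off the diagonal, some
minimiser of its Rayleigh quotient is a nonnegative eigenvector `y`, and `y` is positive because the
Dynkin diagram is connected. If its eigenvalue is positive, `A` is of finite type; if it is zero,
`y` spans the kernel of `A`, so an integral kernel vector can be taken positive; if it is negative,
the open cone `{x > 0, Ax < 0}` contains `y`, hence a lattice point. A positive integral vector `α`
with `Aα ≤ 0` lies in the fundamental set `K`.
-/

section ZMatrix

open Matrix

variable {M : Matrix ι ι ℝ} {G : SimpleGraph ι}

lemma mulVec_apply_nonpos_of_eq_zero (hoff : ∀ i j, i ≠ j → M i j ≤ 0) {x : ι → ℝ}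
    (hx : 0 ≤ x) {k : ι} (hk : x k = 0) : (M *ᵥ x) k ≤ 0 := by
  rw [mulVec, dotProduct, ← Finset.add_sum_erase _ _ (Finset.mem_univ k), hk, mul_zero, zero_add]
  exact Finset.sum_nonpos fun j hj =>
    mul_nonpos_of_nonpos_of_nonneg (hoff k j (Finset.ne_of_mem_erase hj).symm) (hx j)

lemma eq_zero_of_adj_of_eq_zero (hoff : ∀ i j, i ≠ j → M i j ≤ 0)
    (hadj : ∀ i j, G.Adj i j → M i j < 0) {x : ι → ℝ} (hx : 0 ≤ x) {k : ι} (hk : x k = 0)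
    (hMx : 0 ≤ (M *ᵥ x) k) {j : ι} (hkj : G.Adj k j) : x j = 0 := by
  have hterm : ∀ l ∈ Finset.univ.erase k, M k l * x l ≤ 0 := fun l hl =>
    mul_nonpos_of_nonpos_of_nonneg (hoff k l (Finset.ne_of_mem_erase hl).symm) (hx l)
  have hsum : ∑ l ∈ Finset.univ.erase k, M k l * x l = 0 := by
    refine le_antisymm (Finset.sum_nonpos hterm) ?_
    rwa [mulVec, dotProduct, ← Finset.add_sum_erase _ _ (Finset.mem_univ k), hk, mul_zero,
      zero_add] at hMx
  have hj := (Finset.sum_eq_zero_iff_of_nonpos hterm).1 hsum j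
    (Finset.mem_erase.2 ⟨hkj.ne.symm, Finset.mem_univ j⟩)
  exact (mul_eq_zero.1 hj).resolve_left (hadj k j hkj).ne

lemma pos_of_nonneg_of_ne_zero (hoff : ∀ i j, i ≠ j → M i j ≤ 0)
    (hadj : ∀ i j, G.Adj i j → M i j < 0) (hG : G.Connected) {x : ι → ℝ} (hx : 0 ≤ x)
    (hx0 : x ≠ 0) (hMx : ∀ i, x i = 0 → 0 ≤ (M *ᵥ x) i) (i : ι) : 0 < x i := by
  have hwalk : ∀ {u v : ι}, G.Walk u v → x u = 0 → x v = 0 := by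
    intro u v p
    induction p with
    | nil => exact id
    | cons h _ ih => exact fun hu => ih (eq_zero_of_adj_of_eq_zero hoff hadj hx hu (hMx _ hu) h)
  refine (hx i).lt_of_ne fun hi => hx0 (funext fun k => ?_)
  exact hwalk (hG.preconnected i k).some hi.symm

omit [DecidableEq ι] in
lemma exists_sub_smul_nonneg_eq_zero [Nonempty ι] (x : ι → ℝ) {y : ι → ℝ}
    (hy : ∀ i, 0 < y i) : ∃ t : ℝ, 0 ≤ x - t • y ∧ ∃ k, (x - t • y) k = 0 := by
  obtain ⟨k, hk⟩ := Finite.exists_min fun i => x i / y i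
  refine ⟨x k / y k, fun i => ?_, k, ?_⟩
  · have := (le_div_iff₀ (hy i)).1 (hk i)
    simp only [Pi.zero_apply, Pi.sub_apply, Pi.smul_apply, smul_eq_mul]
    linarith
  · simp [div_mul_cancel₀ _ (hy k).ne']

lemma eq_smul_of_mulVec_eq_zero [Nonempty ι] (hoff : ∀ i j, i ≠ j → M i j ≤ 0)
    (hadj : ∀ i j, G.Adj i j → M i j < 0) (hG : G.Connected) {y : ι → ℝ}
    (hy : ∀ i, 0 < y i) (hMy : M *ᵥ y = 0) {v : ι → ℝ} (hMv : M *ᵥ v = 0) :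
    ∃ t : ℝ, v = t • y := by
  obtain ⟨t, hnonneg, k, hk⟩ := exists_sub_smul_nonneg_eq_zero v hy
  have hM : M *ᵥ (v - t • y) = 0 := by rw [mulVec_sub, mulVec_smul, hMv, hMy, smul_zero, sub_zero]
  refine ⟨t, sub_eq_zero.1 (by_contra fun hne => ?_)⟩
  exact (pos_of_nonneg_of_ne_zero hoff hadj hG hnonneg hne (fun i _ => by simp [hM]) k).ne' hk

lemma pos_or_eq_zero_of_mulVec_nonneg (hoff : ∀ i j, i ≠ j → M i j ≤ 0)
    (hadj : ∀ i j, G.Adj i j → M i j < 0) (hG : G.Connected) {y : ι → ℝ}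
    (hy : ∀ i, 0 < y i) (hMy : ∀ i, 0 < (M *ᵥ y) i) {u : ι → ℝ} (hu : 0 ≤ M *ᵥ u) :
    (∀ i, 0 < u i) ∨ u = 0 := by
  suffices hu0 : 0 ≤ u by
    by_cases h : u = 0
    · exact Or.inr h
    · exact Or.inl (pos_of_nonneg_of_ne_zero hoff hadj hG hu0 h fun i _ => hu i)
  intro j
  change 0 ≤ u j
  by_contra! hj
  have : Nonempty ι := ⟨j⟩
  obtain ⟨t, hnonneg, k, hk⟩ := exists_sub_smul_nonneg_eq_zero u hy
  have ht : t < 0 := by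
    have := hnonneg j
    simp only [Pi.zero_apply, Pi.sub_apply, Pi.smul_apply, smul_eq_mul] at this
    by_contra! ht
    nlinarith [mul_nonneg ht (hy j).le]
  have hle := mulVec_apply_nonpos_of_eq_zero hoff hnonneg hk
  rw [mulVec_sub, mulVec_smul, Pi.sub_apply, Pi.smul_apply, smul_eq_mul] at hle
  have huk : 0 ≤ (M *ᵥ u) k := hu k
  nlinarith [mul_pos (neg_pos.2 ht) (hMy k)]

omit [DecidableEq ι] in
lemma abs_dotProduct_mulVec_abs_le (hoff : ∀ i j, i ≠ j → M i j ≤ 0) (x : ι → ℝ) :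
    |x| ⬝ᵥ M *ᵥ |x| ≤ x ⬝ᵥ M *ᵥ x := by
  simp only [dotProduct, mulVec, Finset.mul_sum]
  refine Finset.sum_le_sum fun i _ => Finset.sum_le_sum fun j _ => ?_
  simp only [Pi.abs_apply]
  rcases eq_or_ne i j with rfl | hij
  · rw [mul_left_comm, abs_mul_abs_self, mul_left_comm]
  · rw [mul_left_comm, mul_left_comm (x i)]
    exact mul_le_mul_of_nonpos_left ((le_abs_self _).trans (abs_mul _ _).le) (hoff i j hij)

lemma exists_nonneg_eigenvector [Nonempty ι] (hM : M.IsSymm)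
    (hoff : ∀ i j, i ≠ j → M i j ≤ 0) :
    ∃ y : ι → ℝ, 0 ≤ y ∧ y ≠ 0 ∧ ∃ μ : ℝ, M *ᵥ y = μ • y := by
  set T := toEuclideanCLM (𝕜 := ℝ) (n := ι) M
  have hT : IsSelfAdjoint T := (isHermitian_iff_isSymm.2 hM).isSelfAdjoint.map _
  have hq : ∀ x : EuclideanSpace ℝ ι, T.reApplyInnerSelf x = x.ofLp ⬝ᵥ M *ᵥ x.ofLp := by
    intro x
    rw [ContinuousLinearMap.reApplyInnerSelf, RCLike.re_to_real, real_inner_comm,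
      inner_toEuclideanCLM]
  obtain ⟨x, hx, hmin⟩ := (isCompact_sphere (0 : EuclideanSpace ℝ ι) 1).exists_isMinOn
    (NormedSpace.sphere_nonempty.2 zero_le_one) T.reApplyInnerSelf_continuous.continuousOn
  set y : EuclideanSpace ℝ ι := WithLp.toLp 2 |x.ofLp|
  have hy : ‖y‖ = 1 := by
    rw [← mem_sphere_zero_iff_norm.1 hx, EuclideanSpace.norm_eq, EuclideanSpace.norm_eq]
    simp [y]
  have hy0 : y ≠ 0 := by rintro h; simp [h] at hy
  have hymin : IsMinOn T.reApplyInnerSelf (Metric.sphere 0 ‖y‖) y := fun z hz => by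
    rw [hy] at hz
    exact ((hq y).trans_le (abs_dotProduct_mulVec_abs_le hoff _)).trans ((hq x).symm.trans_le
      (hmin hz))
  refine ⟨|x.ofLp|, abs_nonneg _, fun h => hy0 (by simp [y, h]), _,
    congrArg WithLp.ofLp (hT.hasEigenvector_of_isMinOn hy0 hymin).apply_eq_smul⟩

end ZMatrix

section ImaginaryRoots

open Matrix

omit [Fintype ι] [DecidableEq ι] in
@[simp] lemma castR_apply (α : ι → ℤ) (i : ι) : castR α i = α i := rfl

omit [DecidableEq ι] in
lemma exists_castR_mem_of_isOpen {U : Set (ι → ℝ)} (hU : IsOpen U)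
    (hcone : ∀ c : ℝ, 0 < c → ∀ x ∈ U, c • x ∈ U) (hne : U.Nonempty) :
    ∃ α : ι → ℤ, castR α ∈ U := by
  obtain ⟨y, hy⟩ := hne
  obtain ⟨r, hr, hball⟩ := Metric.isOpen_iff.1 hU y hy
  obtain ⟨N, hN⟩ := exists_nat_gt r⁻¹
  have hN0 : (0 : ℝ) < N := (inv_pos.2 hr).trans hN
  have hNr : (N : ℝ)⁻¹ < r := inv_lt_of_inv_lt₀ hr hN
  refine ⟨fun i => round (N * y i), ?_⟩
  have hmem : (N : ℝ)⁻¹ • castR (fun i => round (N * y i)) ∈ U := by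
    refine hball ((dist_pi_lt_iff hr).2 fun i => ?_)
    have hround := abs_sub_round ((N : ℝ) * y i)
    have heq : (N : ℝ)⁻¹ * round ((N : ℝ) * y i) - y i
        = (N : ℝ)⁻¹ * ((N : ℝ) * y i - round ((N : ℝ) * y i)) * (-1) := by
      field_simp
      ring
    calc dist ((N : ℝ)⁻¹ • castR (fun i => round (N * y i)) i) (y i)
        = (N : ℝ)⁻¹ * |(N : ℝ) * y i - round ((N : ℝ) * y i)| := by
          simp only [castR_apply, smul_eq_mul, Real.dist_eq, heq, abs_mul,
            abs_neg, abs_one, mul_one, abs_of_pos (inv_pos.2 hN0)]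
      _ ≤ (N : ℝ)⁻¹ * (1 / 2) := mul_le_mul_of_nonneg_left hround (by positivity)
      _ < r := by linarith
  simpa [smul_smul, hN0.ne'] using hcone N hN0 _ hmem

omit [DecidableEq ι] in
lemma castR_mulVec (A : Matrix ι ι ℤ) (α : ι → ℤ) :
    castR (A *ᵥ α) = A.map (Int.cast : ℤ → ℝ) *ᵥ castR α :=
  funext (RingHom.map_mulVec (Int.castRingHom ℝ) A α)

namespace IsGCM

variable {A : Matrix ι ι ℤ}

omit [Fintype ι] [DecidableEq ι] in
lemma cast_apply_nonpos (hA : IsGCM A) (i j : ι) (hij : i ≠ j) :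
    A.map (Int.cast : ℤ → ℝ) i j ≤ 0 := by
  simpa using hA.2.2 i j hij

omit [Fintype ι] [DecidableEq ι] in
lemma cast_apply_neg_of_adj (hA : IsGCM A) (i j : ι) (h : (dynkin A).Adj i j) :
    A.map (Int.cast : ℤ → ℝ) i j < 0 := by
  rcases h.2 with h | h
  · simpa using h
  · simpa [hA.1.apply j i] using h

end IsGCM

variable {A : Matrix ι ι ℤ}

lemma isFiniteType_of_pos (hA : IsGCM A) (hconn : (dynkin A).Connected) {y : ι → ℝ}
    (hy : ∀ i, 0 < y i) (hAy : ∀ i, 0 < (A.map (Int.cast : ℤ → ℝ) *ᵥ y) i) :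
    IsFiniteType A := by
  have key := fun {u : ι → ℝ} => pos_or_eq_zero_of_mulVec_nonneg hA.cast_apply_nonpos
    hA.cast_apply_neg_of_adj hconn hy hAy (u := u)
  refine ⟨fun hdet => ?_, ⟨y, hy, hAy⟩, fun u hu => key hu⟩
  obtain ⟨u, hu0, hAu⟩ := exists_mulVec_eq_zero_iff.2
    (show (A.map (Int.cast : ℤ → ℝ)).det = 0 by rw [← Int.cast_det, hdet, Int.cast_zero])
  obtain ⟨i, -⟩ := Function.ne_iff.1 hu0
  rcases key hAu.ge, key (u := -u) (by rw [mulVec_neg, hAu, neg_zero]) with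
    ⟨hpos | rfl, hneg | hneg⟩
  · linarith [hpos i, hneg i, show (-u) i = - u i from rfl]
  · exact hu0 (neg_eq_zero.1 hneg)
  all_goals exact hu0 rfl

lemma mem_fundamentalSet_of_pos (hA : IsGCM A) (hconn : (dynkin A).Connected) {α : ι → ℤ}
    (hα : ∀ i, 0 < α i) (hAα : ∀ i, (A *ᵥ α) i ≤ 0) : α ∈ fundamentalSet A := by
  have hsupp : {i | α i ≠ 0} = Set.univ := Set.eq_univ_of_forall fun i => (hα i).ne'
  refine ⟨fun i => (hα i).le, fun h => ?_, ?_, fun i => ?_⟩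
  · obtain ⟨i⟩ := hconn.nonempty
    exact (hα i).ne' (congrFun h i)
  · rw [hsupp]
    exact (SimpleGraph.induceUnivIso (dynkin A)).connected_iff.2 hconn
  · convert hAα i using 1
    simp [bform, sroot, mulVec, dotProduct, Pi.single_apply, hA.1.apply, mul_comm]

lemma fundamentalSet_nonempty_of_mulVec_neg (hA : IsGCM A) (hconn : (dynkin A).Connected)
    {y : ι → ℝ} (hy : ∀ i, 0 < y i) (hAy : ∀ i, (A.map (Int.cast : ℤ → ℝ) *ᵥ y) i < 0) :
    (fundamentalSet A).Nonempty := by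
  set M := A.map (Int.cast : ℤ → ℝ)
  have hU : IsOpen {x : ι → ℝ | (∀ i, 0 < x i) ∧ ∀ i, (M *ᵥ x) i < 0} := by
    simp only [Set.ofPred_and, Set.ofPred_forall]
    exact (isOpen_iInter_of_finite fun i => isOpen_lt continuous_const (continuous_apply i)).inter
      (isOpen_iInter_of_finite fun i => isOpen_lt
        ((continuous_apply i).comp (continuous_const.matrix_mulVec continuous_id))
        continuous_const)
  obtain ⟨α, hαpos, hMα⟩ := exists_castR_mem_of_isOpen hU
    (fun c hc x hx => ⟨fun i => by simpa using mul_pos hc (hx.1 i),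
      fun i => by simpa [mulVec_smul] using mul_neg_of_pos_of_neg hc (hx.2 i)⟩) ⟨y, hy, hAy⟩
  exact ⟨α, mem_fundamentalSet_of_pos hA hconn (fun i => by simpa using hαpos i)
    fun i => by simpa [M, ← castR_mulVec] using (hMα i).le⟩

lemma fundamentalSet_nonempty_of_mulVec_eq_zero (hA : IsGCM A) (hconn : (dynkin A).Connected)
    {y : ι → ℝ} (hy : ∀ i, 0 < y i) (hAy : A.map (Int.cast : ℤ → ℝ) *ᵥ y = 0) :
    (fundamentalSet A).Nonempty := by
  have : Nonempty ι := hconn.nonempty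
  obtain ⟨v, hv0, hAv⟩ := exists_mulVec_eq_zero_iff.2 (show A.det = 0 by
    have : (A.map (Int.cast : ℤ → ℝ)).det = 0 :=
      exists_mulVec_eq_zero_iff.1 ⟨y, fun h => (hy (Classical.arbitrary ι)).ne' (congrFun h _), hAy⟩
    exact_mod_cast (Int.cast_det (R := ℝ) A).trans this)
  obtain ⟨t, ht⟩ := eq_smul_of_mulVec_eq_zero hA.cast_apply_nonpos hA.cast_apply_neg_of_adj
    hconn hy hAy (v := castR v) (by rw [← castR_mulVec, hAv]; ext; simp)
  have hv : castR |v| = |t| • y := funext fun i => by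
    rw [Pi.smul_apply, smul_eq_mul, castR_apply, Pi.abs_apply, Int.cast_abs,
      show (v i : ℝ) = t * y i from congrFun ht i, abs_mul, abs_of_pos (hy i)]
  have ht0 : t ≠ 0 := by
    rintro rfl
    exact hv0 (funext fun i => by simpa using congrFun ht i)
  refine ⟨|v|, mem_fundamentalSet_of_pos hA hconn (fun i => ?_) fun i => ?_⟩
  · have : (0 : ℝ) < castR |v| i := by
      rw [hv]
      exact mul_pos (abs_pos.2 ht0) (hy i)
    simpa using this
  · have : castR (A *ᵥ |v|) i = 0 := by
      rw [castR_mulVec, hv, mulVec_smul, hAy, smul_zero]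
      rfl
    exact (Int.cast_eq_zero.1 this).le

theorem fundamentalSet_nonempty (hA : IsGCM A) (hconn : (dynkin A).Connected)
    (hnf : ¬ IsFiniteType A) : (fundamentalSet A).Nonempty := by
  have : Nonempty ι := hconn.nonempty
  have hoff := hA.cast_apply_nonpos
  obtain ⟨y, hy0, hy, μ, hMy⟩ := exists_nonneg_eigenvector (hA.1.map _) hoff
  have hypos : ∀ i, 0 < y i := pos_of_nonneg_of_ne_zero hoff hA.cast_apply_neg_of_adj hconn
    hy0 hy fun i hi => by simp [hMy, hi]
  rcases lt_trichotomy μ 0 with hμ | rfl | hμ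
  · exact fundamentalSet_nonempty_of_mulVec_neg hA hconn hypos fun i => by
      rw [hMy]
      exact mul_neg_of_neg_of_pos hμ (hypos i)
  · exact fundamentalSet_nonempty_of_mulVec_eq_zero hA hconn hypos (by rw [hMy, zero_smul])
  · exact absurd (isFiniteType_of_pos hA hconn hypos fun i => by
      rw [hMy]
      exact mul_pos hμ (hypos i)) hnf

end ImaginaryRoots

section ImaginaryCone

open Pointwise

variable {A : Matrix ι ι ℤ} {hA : IsGCM A}

lemma zsmul_mem_fundamentalSet {α : ι → ℤ} (hα : α ∈ fundamentalSet A) {n : ℤ} (hn : 0 < n) :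
    n • α ∈ fundamentalSet A := by
  obtain ⟨h0, hne, hconn, hb⟩ := hα
  have hsupp : {i | (n • α) i ≠ 0} = {i | α i ≠ 0} := by
    ext i
    simp [hn.ne']
  refine ⟨fun i => ?_, smul_ne_zero hn.ne' hne, hsupp ▸ hconn, fun i => ?_⟩
  · simpa using mul_nonneg hn.le (h0 i)
  · have : bform A (n • α) (sroot i) = n * bform A α (sroot i) := by
      simp only [bform, Finset.mul_sum, Pi.smul_apply, smul_eq_mul, mul_assoc]
    rw [this]
    exact mul_nonpos_of_nonneg_of_nonpos hn.le (hb i)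

lemma zsmul_mem_posImRoots {β : ι → ℤ} (hβ : β ∈ posImRoots A hA) {n : ℤ} (hn : 0 < n) :
    n • β ∈ posImRoots A hA := by
  obtain ⟨w, hw, α, hα, rfl⟩ := hβ
  exact ⟨w, hw, n • α, zsmul_mem_fundamentalSet hα hn, (map_zsmul w n α).symm⟩

lemma zero_mem_imCone : (0 : ι → ℝ) ∈ imCone A hA :=
  subset_closure (subset_convexHull _ _ (Set.mem_insert _ _))

lemma castR_mem_imCone {β : ι → ℤ} (hβ : β ∈ posImRoots A hA) : castR β ∈ imCone A hA :=
  subset_closure (subset_convexHull _ _ (Set.mem_insert_of_mem _ ⟨β, hβ, rfl⟩))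

lemma convex_imCone : Convex ℝ (imCone A hA) :=
  (convex_convexHull ℝ _).closure

lemma isClosed_imCone : IsClosed (imCone A hA) :=
  isClosed_closure

lemma smul_mem_imCone {c : ℝ} (hc : 0 ≤ c) {x : ι → ℝ} (hx : x ∈ imCone A hA) :
    c • x ∈ imCone A hA := by
  obtain ⟨n, hn⟩ := exists_nat_gt c
  have hn0 : (0 : ℝ) < n := hc.trans_lt hn
  have hroots : (n : ℝ) • insert 0 (castR '' posImRoots A hA) ⊆
      insert 0 (castR '' posImRoots A hA) := by
    rw [Set.smul_set_insert, smul_zero]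
    rintro _ (h | ⟨_, ⟨β, hβ, rfl⟩, rfl⟩)
    · exact Or.inl h
    · refine Or.inr ⟨(n : ℤ) • β, zsmul_mem_posImRoots hβ (by exact_mod_cast hn0), ?_⟩
      ext i
      simp [castR]
  have hnx : (n : ℝ) • x ∈ imCone A hA := by
    refine closure_mono ?_ (smul_closure_subset _ _ ⟨x, hx, rfl⟩)
    rw [← convexHull_smul]
    exact convexHull_mono hroots
  have hcx : c • x = (c / n) • ((n : ℝ) • x) := by rw [smul_smul, div_mul_cancel₀ _ hn0.ne']
  rw [hcx]
  exact convex_imCone.smul_mem_of_zero_mem zero_mem_imCone hnx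
    ⟨div_nonneg hc hn0.le, (div_le_one hn0).2 hn.le⟩

end ImaginaryCone

section Sector

open Complex
open scoped Real

lemma arg_mem_Ioo_of_im_pos {z : ℂ} (hz : 0 < z.im) : arg z ∈ Set.Ioo 0 π :=
  ⟨(arg_nonneg_iff.2 hz.le).lt_of_ne fun h => hz.ne' (arg_eq_zero_iff.1 h.symm).2,
    arg_lt_pi_iff.2 (Or.inr hz.ne')⟩

lemma continuousAt_arg_of_im_pos {z : ℂ} (hz : 0 < z.im) : ContinuousAt arg z :=
  continuousAt_arg (mem_slitPlane_iff.2 (Or.inr hz.ne'))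

lemma ofReal_pi_mul_mul_I (φ : ℝ) : (π : ℂ) * φ * I = ((π * φ : ℝ) : ℂ) * I := by
  push_cast
  ring

lemma im_pos_of_mem_sector {φ₁ φ₂ : ℝ} (h₁ : 0 < φ₁) (h₂ : φ₂ < 1) {z : ℂ}
    (hz : z ∈ sector φ₁ φ₂) : 0 < z.im := by
  obtain ⟨r, hr, φ, hφ₁, hφ₂, rfl⟩ := hz
  rw [ofReal_pi_mul_mul_I, im_ofReal_mul, exp_ofReal_mul_I_im]
  exact mul_pos hr (Real.sin_pos_of_pos_of_lt_pi (mul_pos Real.pi_pos (by linarith))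
    (by nlinarith [Real.pi_pos]))

lemma image_exp_mul_sector (δ φ₁ φ₂ : ℝ) :
    (fun z => exp (π * δ * I) * z) '' sector φ₁ φ₂ = sector (φ₁ + δ) (φ₂ + δ) := by
  have key : ∀ r φ : ℝ, exp (π * δ * I) * (r * exp (π * φ * I)) = r * exp (π * ↑(φ + δ) * I) :=
    fun r φ => by
      rw [mul_left_comm, ← exp_add]
      push_cast
      ring_nf
  ext z
  constructor
  · rintro ⟨_, ⟨r, hr, φ, h₁, h₂, rfl⟩, rfl⟩
    exact ⟨r, hr, φ + δ, by linarith, by linarith, by dsimp only; rw [key]⟩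
  · rintro ⟨r, hr, φ, h₁, h₂, rfl⟩
    exact ⟨_, ⟨r, hr, φ - δ, by linarith, by linarith, rfl⟩,
      by dsimp only; rw [key, sub_add_cancel]⟩

lemma arg_mul_exp_pi_mul_I {r φ : ℝ} (hr : 0 < r) (h₁ : -1 < φ) (h₂ : φ ≤ 1) :
    arg (r * exp (π * φ * I)) = π * φ := by
  rw [arg_real_mul _ hr, ofReal_pi_mul_mul_I, arg_exp_mul_I, toIocMod_eq_self]
  constructor <;> nlinarith [Real.pi_pos]

lemma arg_image_sector {φ₁ φ₂ : ℝ} (h₁ : -1 < φ₁) (h₂ : φ₂ ≤ 1) :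
    arg '' sector φ₁ φ₂ = Set.Icc (π * φ₁) (π * φ₂) := by
  ext θ
  constructor
  · rintro ⟨_, ⟨r, hr, φ, hφ₁, hφ₂, rfl⟩, rfl⟩
    rw [arg_mul_exp_pi_mul_I hr (by linarith) (by linarith)]
    exact ⟨by nlinarith [Real.pi_pos], by nlinarith [Real.pi_pos]⟩
  · rintro ⟨hθ₁, hθ₂⟩
    have hφ₁ : φ₁ ≤ θ / π := (le_div_iff₀' Real.pi_pos).2 hθ₁
    have hφ₂ : θ / π ≤ φ₂ := (div_le_iff₀' Real.pi_pos).2 hθ₂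
    refine ⟨_, ⟨1, one_pos, θ / π, hφ₁, hφ₂, rfl⟩, ?_⟩
    rw [arg_mul_exp_pi_mul_I one_pos (by linarith) (by linarith), mul_div_cancel₀ _ Real.pi_ne_zero]

-- `c` shifts both sectors into the branch `(-1, 1]` of `arg / π`.
lemma eq_of_sector_eq {φ₁ φ₂ ψ₁ ψ₂ : ℝ} (c : ℝ) (hφ : φ₁ ≤ φ₂) (hφ₁ : -1 < φ₁ + c)
    (hφ₂ : φ₂ + c ≤ 1) (hψ₁ : -1 < ψ₁ + c) (hψ₂ : ψ₂ + c ≤ 1)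
    (h : sector φ₁ φ₂ = sector ψ₁ ψ₂) : φ₁ = ψ₁ ∧ φ₂ = ψ₂ := by
  have h' := congrArg (fun s => arg '' ((fun z => exp (π * c * I) * z) '' s)) h
  simp only [image_exp_mul_sector, arg_image_sector hφ₁ hφ₂, arg_image_sector hψ₁ hψ₂] at h'
  obtain ⟨h₁, h₂⟩ := (Set.Icc_eq_Icc_iff (by nlinarith [Real.pi_pos])).1 h'
  have := Real.pi_pos
  constructor
  · nlinarith [mul_left_cancel₀ Real.pi_ne_zero h₁]
  · nlinarith [mul_left_cancel₀ Real.pi_ne_zero h₂]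

lemma eq_sector_of_arg_image {D : Set ℂ} (h0 : (0 : ℂ) ∉ D)
    (hcone : ∀ c : ℝ, 0 < c → ∀ z ∈ D, (c : ℂ) * z ∈ D) {a b : ℝ}
    (harg : arg '' D = Set.Icc a b) : D = sector (a / π) (b / π) := by
  have hpolar : ∀ {z : ℂ}, exp (π * ↑(arg z / π) * I) = exp (arg z * I) := by
    intro z
    rw [ofReal_pi_mul_mul_I, mul_div_cancel₀ _ Real.pi_ne_zero]
  ext z
  constructor
  · intro hz
    have hθ : arg z ∈ Set.Icc a b := harg ▸ ⟨z, hz, rfl⟩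
    refine ⟨‖z‖, norm_pos_iff.2 (ne_of_mem_of_not_mem hz h0), arg z / π,
      div_le_div_of_nonneg_right hθ.1 Real.pi_pos.le,
      div_le_div_of_nonneg_right hθ.2 Real.pi_pos.le, ?_⟩
    rw [hpolar, norm_mul_exp_arg_mul_I]
  · rintro ⟨r, hr, φ, hφ₁, hφ₂, rfl⟩
    obtain ⟨w, hw, hwarg⟩ : π * φ ∈ arg '' D := harg ▸
      ⟨(div_le_iff₀' Real.pi_pos).1 hφ₁, (le_div_iff₀' Real.pi_pos).1 hφ₂⟩
    have hw0 : (0 : ℝ) < ‖w‖ := norm_pos_iff.2 (ne_of_mem_of_not_mem hw h0)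
    convert hcone (r / ‖w‖) (div_pos hr hw0) w hw using 1
    calc (r : ℂ) * exp (π * φ * I) = ((r / ‖w‖ : ℝ) : ℂ) * (‖w‖ * exp (arg w * I)) := by
          rw [hwarg, ofReal_pi_mul_mul_I, ← mul_assoc, ← ofReal_mul, div_mul_cancel₀ _ hw0.ne']
      _ = ((r / ‖w‖ : ℝ) : ℂ) * w := by rw [norm_mul_exp_arg_mul_I]

end Sector

section Pairing

omit [DecidableEq ι] in
lemma isLinearMap_pairC (Z : ι → ℂ) : IsLinearMap ℝ (pairC Z) where
  map_add x y := by
    simp only [pairC, Pi.add_apply, Complex.ofReal_add, mul_add, Finset.sum_add_distrib]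
  map_smul c x := by
    simp only [pairC, Pi.smul_apply, smul_eq_mul, Complex.ofReal_mul, Finset.smul_sum,
      Complex.real_smul]
    exact Finset.sum_congr rfl fun i _ => by ring

omit [DecidableEq ι] in
lemma pairC_smul_left (c : ℂ) (Z : ι → ℂ) (x : ι → ℝ) : pairC (c • Z) x = c * pairC Z x := by
  simp [pairC, Finset.mul_sum, mul_assoc]

omit [DecidableEq ι] in
lemma pairCZ_smul_left (c : ℂ) (Z : ι → ℂ) (α : ι → ℤ) : pairCZ (c • Z) α = c * pairCZ Z α := by
  simp [pairCZ, Finset.mul_sum, mul_assoc]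

omit [DecidableEq ι] in
lemma continuous_pairC : Continuous fun p : (ι → ℂ) × (ι → ℝ) => pairC p.1 p.2 := by
  unfold pairC
  fun_prop

end Pairing

section ConeImage

open Complex
open scoped Real

variable {A : Matrix ι ι ℤ} {hA : IsGCM A}

-- By homogeneity these are all the arguments of `Z(I₀)`; restricting to the sphere makes the set
-- compact.
def imConeArgs (A : Matrix ι ι ℤ) (hA : IsGCM A) (Z : ι → ℂ) : Set ℝ :=
  (fun x => arg (pairC Z x)) '' (imCone A hA ∩ Metric.sphere 0 1)

lemma isCompact_imCone_inter_sphere : IsCompact (imCone A hA ∩ Metric.sphere 0 1) :=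
  (isCompact_sphere 0 1).inter_left isClosed_imCone

lemma imCone_inter_sphere_subset : imCone A hA ∩ Metric.sphere 0 1 ⊆ imCone A hA \ {0} :=
  fun x hx => ⟨hx.1, by rintro rfl; simpa using hx.2⟩

lemma normalize_mem_imCone_inter_sphere {x : ι → ℝ} (hx : x ∈ imCone A hA \ {0}) :
    ‖x‖⁻¹ • x ∈ imCone A hA ∩ Metric.sphere 0 1 :=
  ⟨smul_mem_imCone (inv_nonneg.2 (norm_nonneg x)) hx.1,
    mem_sphere_zero_iff_norm.2 (norm_smul_inv_norm hx.2)⟩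

lemma imCone_inter_sphere_nonempty (hconn : (dynkin A).Connected) (hnf : ¬ IsFiniteType A) :
    (imCone A hA ∩ Metric.sphere 0 1).Nonempty := by
  obtain ⟨α, hα⟩ := fundamentalSet_nonempty hA hconn hnf
  refine ⟨_, normalize_mem_imCone_inter_sphere
    ⟨castR_mem_imCone ⟨1, (weylGroup A hA).one_mem, α, hα, rfl⟩, fun h => hα.2.1 ?_⟩⟩
  ext i
  simpa using congrFun h i

lemma arg_image_pairC_eq_imConeArgs (Z : ι → ℂ) :
    arg '' (pairC Z '' (imCone A hA \ {0})) = imConeArgs A hA Z := by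
  rw [Set.image_image, imConeArgs]
  refine (Set.image_mono imCone_inter_sphere_subset).antisymm' ?_
  rintro _ ⟨x, hx, rfl⟩
  refine ⟨_, normalize_mem_imCone_inter_sphere hx, ?_⟩
  dsimp only
  rw [(isLinearMap_pairC Z).map_smul, real_smul, arg_real_mul _ (inv_pos.2 (norm_pos_iff.2 hx.2))]

lemma image_pairC_eq_inter {Z : ι → ℂ} (hZ : Z ∈ Treg A hA) :
    pairC Z '' (imCone A hA \ {0}) = pairC Z '' imCone A hA ∩ {z | 0 < z.im} := by
  ext z
  constructor
  · rintro ⟨x, hx, rfl⟩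
    exact ⟨⟨x, hx.1, rfl⟩, hZ.2 x hx⟩
  · rintro ⟨⟨x, hx, rfl⟩, him⟩
    refine ⟨x, ⟨hx, fun h0 => ?_⟩, rfl⟩
    rw [Set.mem_singleton_iff.1 h0, (isLinearMap_pairC Z).map_zero] at him
    simp at him

theorem image_pairC_eq_sector (hconn : (dynkin A).Connected) (hnf : ¬ IsFiniteType A)
    {Z : ι → ℂ} (hZ : Z ∈ Treg A hA) :
    0 < sInf (imConeArgs A hA Z) ∧ sInf (imConeArgs A hA Z) ≤ sSup (imConeArgs A hA Z) ∧
      sSup (imConeArgs A hA Z) < π ∧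
      pairC Z '' (imCone A hA \ {0}) =
        sector (sInf (imConeArgs A hA Z) / π) (sSup (imConeArgs A hA Z) / π) := by
  set S := imConeArgs A hA Z
  set D := pairC Z '' (imCone A hA \ {0})
  have hDeq : D = pairC Z '' imCone A hA ∩ {z | 0 < z.im} := image_pairC_eq_inter hZ
  have hSD : arg '' D = S := arg_image_pairC_eq_imConeArgs Z
  have hDim : ∀ z ∈ D, 0 < z.im := fun z hz => (hDeq.le hz).2
  have hS : IsCompact S := isCompact_imCone_inter_sphere.image_of_continuousOn fun x hx =>
    ((continuousAt_arg_of_im_pos (hZ.2 x (imCone_inter_sphere_subset hx))).comp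
      (continuous_pairC.comp (Continuous.prodMk_right Z)).continuousAt).continuousWithinAt
  have hD : IsConnected D := by
    refine Convex.isConnected ?_ (((imCone_inter_sphere_nonempty (hA := hA) hconn hnf).image
      (pairC Z)).mono (Set.image_mono imCone_inter_sphere_subset))
    rw [hDeq]
    exact (convex_imCone.is_linear_image (isLinearMap_pairC Z)).inter (convex_halfSpace_im_gt 0)
  have hSconn : IsConnected S := by
    rw [← hSD]
    exact hD.image _ fun z hz => (continuousAt_arg_of_im_pos (hDim z hz)).continuousWithinAt
  have hSpos : ∀ θ ∈ S, θ ∈ Set.Ioo 0 π := by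
    rw [← hSD]
    rintro _ ⟨z, hz, rfl⟩
    exact arg_mem_Ioo_of_im_pos (hDim z hz)
  refine ⟨(hSpos _ (hS.sInf_mem hSconn.nonempty)).1,
    csInf_le_csSup hSconn.nonempty hS.bddBelow hS.bddAbove,
    (hSpos _ (hS.sSup_mem hSconn.nonempty)).2,
    eq_sector_of_arg_image (fun h0 => by simpa using hDim 0 h0) ?_ ?_⟩
  · rintro c hc _ ⟨x, hx, rfl⟩
    refine ⟨c • x, ⟨smul_mem_imCone hc.le hx.1, ?_⟩, ?_⟩
    · simpa [hc.ne'] using hx.2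
    · rw [(isLinearMap_pairC Z).map_smul, real_smul]
  · rw [hSD]
    exact eq_Icc_of_connected_compact hSconn hS

end ConeImage

section Retraction

open Complex
open scoped Real

variable {A : Matrix ι ι ℤ} {hA : IsGCM A}

lemma phaseI_eq_of_image_eq_sector {Z : ι → ℂ} {φ₁ φ₂ : ℝ}
    (himg : pairC Z '' (imCone A hA \ {0}) = sector φ₁ φ₂) (h₀ : 0 < φ₁) (h₁₂ : φ₁ ≤ φ₂)
    (h₁ : φ₂ < 1) : phaseI A hA Z = (φ₁ + φ₂) / 2 := by
  have hex : ∃ p : ℝ × ℝ, p.1 ≤ p.2 ∧ p.2 - p.1 < 1 ∧ 0 < p.1 ∧ p.2 < 1 ∧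
      pairC Z '' (imCone A hA \ {0}) = sector p.1 p.2 :=
    ⟨(φ₁, φ₂), h₁₂, by linarith, h₀, h₁, himg⟩
  obtain ⟨hp, -, hp₀, hp₁, himg'⟩ := hex.choose_spec
  obtain ⟨e₁, e₂⟩ := eq_of_sector_eq 0 hp (by linarith) (by linarith) (by linarith) (by linarith)
    (himg'.symm.trans himg)
  rw [phaseI, dif_pos hex, e₁, e₂]

lemma exists_sector_of_mem_Treg (hconn : (dynkin A).Connected) (hnf : ¬ IsFiniteType A)
    {Z : ι → ℂ} (hZ : Z ∈ Treg A hA) : ∃ φ₁ φ₂ : ℝ, 0 < φ₁ ∧ φ₁ ≤ φ₂ ∧ φ₂ < 1 ∧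
      pairC Z '' (imCone A hA \ {0}) = sector φ₁ φ₂ := by
  obtain ⟨h₀, h₁₂, h₁, himg⟩ := image_pairC_eq_sector hconn hnf hZ
  exact ⟨_, _, div_pos h₀ Real.pi_pos, div_le_div_of_nonneg_right h₁₂ Real.pi_pos.le,
    (div_lt_one Real.pi_pos).2 h₁, himg⟩

lemma phaseI_eq_imConeArgs (hconn : (dynkin A).Connected) (hnf : ¬ IsFiniteType A)
    {Z : ι → ℂ} (hZ : Z ∈ Treg A hA) :
    phaseI A hA Z = (sInf (imConeArgs A hA Z) + sSup (imConeArgs A hA Z)) / (2 * π) := by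
  obtain ⟨h₀, h₁₂, h₁, himg⟩ := image_pairC_eq_sector hconn hnf hZ
  rw [phaseI_eq_of_image_eq_sector himg (div_pos h₀ Real.pi_pos)
    (div_le_div_of_nonneg_right h₁₂ Real.pi_pos.le) ((div_lt_one Real.pi_pos).2 h₁)]
  field_simp

theorem continuousOn_phaseI (hconn : (dynkin A).Connected) (hnf : ¬ IsFiniteType A) :
    ContinuousOn (phaseI A hA) (Treg A hA) := by
  set K := imCone A hA ∩ Metric.sphere 0 1
  have : CompactSpace K := isCompact_iff_compactSpace.1 isCompact_imCone_inter_sphere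
  let u : Treg A hA → K → ℝ := fun Z x => arg (pairC (Z : ι → ℂ) (x : ι → ℝ))
  have hpair : Continuous fun p : Treg A hA × K => pairC (p.1 : ι → ℂ) (p.2 : ι → ℝ) :=
    continuous_pairC.comp (continuous_subtype_val.prodMap continuous_subtype_val)
  have hu : Continuous ↿u := continuous_iff_continuousAt.2 fun p =>
    ContinuousAt.comp (f := fun q : Treg A hA × K => pairC (q.1 : ι → ℂ) (q.2 : ι → ℝ))
      (continuousAt_arg_of_im_pos (p.1.2.2 p.2 (imCone_inter_sphere_subset p.2.2)))
      hpair.continuousAt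
  have hS : ∀ Z : Treg A hA, u Z '' Set.univ = imConeArgs A hA Z := fun Z => by
    rw [Set.image_univ, imConeArgs, Set.image_eq_range]
  rw [continuousOn_iff_continuous_domRestrict]
  refine (((isCompact_univ.continuous_sInf hu).add (isCompact_univ.continuous_sSup hu)).div_const
    (2 * π)).congr fun Z => ?_
  change (sInf (u Z '' Set.univ) + sSup (u Z '' Set.univ)) / (2 * π) = phaseI A hA Z
  rw [hS, phaseI_eq_imConeArgs hconn hnf Z.2]

lemma smul_mem_Xreg {Z : ι → ℂ} (hZ : Z ∈ Xreg A hA) {c : ℂ} (hc : c ≠ 0) :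
    c • Z ∈ Xreg A hA :=
  ⟨fun l hl => by rw [pairC_smul_left]; exact mul_ne_zero hc (hZ.1 l hl),
    fun α hα => by rw [pairCZ_smul_left]; exact mul_ne_zero hc (hZ.2 α hα)⟩

lemma image_pairC_exp_smul {Z : ι → ℂ} {φ₁ φ₂ : ℝ}
    (himg : pairC Z '' (imCone A hA \ {0}) = sector φ₁ φ₂) (δ : ℝ) :
    pairC (exp (π * δ * I) • Z) '' (imCone A hA \ {0}) = sector (φ₁ + δ) (φ₂ + δ) := by
  rw [← image_exp_mul_sector, ← himg, Set.image_image]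
  simp only [pairC_smul_left]

lemma mem_Treg_of_image_eq_sector {Z : ι → ℂ} (hZ : Z ∈ Xreg A hA) {φ₁ φ₂ : ℝ}
    (himg : pairC Z '' (imCone A hA \ {0}) = sector φ₁ φ₂) (h₀ : 0 < φ₁) (h₁ : φ₂ < 1) :
    Z ∈ Treg A hA :=
  ⟨hZ, fun l hl => im_pos_of_mem_sector h₀ h₁ (himg ▸ ⟨l, hl, rfl⟩)⟩

lemma phaseI_of_mem_XregN {Z : ι → ℂ} (hZ : Z ∈ XregN A hA) : phaseI A hA Z = 1 / 2 := by
  obtain ⟨-, φ₁, φ₂, h₁₂, hlen, hsum, himg⟩ := hZ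
  rw [phaseI_eq_of_image_eq_sector himg (by linarith) h₁₂ (by linarith)]
  linarith

theorem XregN_subset_Treg : XregN A hA ⊆ Treg A hA :=
  fun _ ⟨hZ, _, _, _, hlen, hsum, himg⟩ =>
    mem_Treg_of_image_eq_sector hZ himg (by linarith) (by linarith)

lemma hRetract_eq_exp_smul (t : ℝ) (Z : ι → ℂ) :
    hRetract A hA t Z = exp (π * ↑(t * (1 / 2 - phaseI A hA Z)) * I) • Z := by
  rw [hRetract]
  push_cast
  ring_nf

lemma hRetract_zero (Z : ι → ℂ) : hRetract A hA 0 Z = Z := by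
  simp [hRetract]

lemma hRetract_of_phaseI_eq (t : ℝ) {Z : ι → ℂ} (h : phaseI A hA Z = 1 / 2) :
    hRetract A hA t Z = Z := by
  simp [hRetract, h]

lemma image_pairC_hRetract {Z : ι → ℂ} {φ₁ φ₂ : ℝ}
    (himg : pairC Z '' (imCone A hA \ {0}) = sector φ₁ φ₂) (h₀ : 0 < φ₁) (h₁₂ : φ₁ ≤ φ₂)
    (h₁ : φ₂ < 1) (t : ℝ) :
    pairC (hRetract A hA t Z) '' (imCone A hA \ {0}) =
      sector (φ₁ + t * (1 / 2 - (φ₁ + φ₂) / 2)) (φ₂ + t * (1 / 2 - (φ₁ + φ₂) / 2)) := by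
  rw [hRetract_eq_exp_smul, phaseI_eq_of_image_eq_sector himg h₀ h₁₂ h₁]
  exact image_pairC_exp_smul himg _

theorem existsUnique_phase (hconn : (dynkin A).Connected) (hnf : ¬ IsFiniteType A)
    {Z : ι → ℂ} (hZ : Z ∈ Treg A hA) :
    ∃! φm : ℝ, 0 < φm ∧ φm < 1 ∧ ∃ φ₁ φ₂ : ℝ, φ₁ ≤ φ₂ ∧ φ₂ - φ₁ < 1 ∧
      (φ₁ + φ₂) / 2 = φm ∧ pairC Z '' (imCone A hA \ {0}) = sector φ₁ φ₂ := by
  obtain ⟨φ₁, φ₂, h₀, h₁₂, h₁, himg⟩ := exists_sector_of_mem_Treg hconn hnf hZ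
  refine ⟨(φ₁ + φ₂) / 2, ⟨by linarith, by linarith, φ₁, φ₂, h₁₂, by linarith, rfl, himg⟩, ?_⟩
  rintro _ ⟨hm₀, hm₁, ψ₁, ψ₂, -, hlen, rfl, himg'⟩
  obtain ⟨e₁, e₂⟩ := eq_of_sector_eq (-1 / 2) h₁₂ (by linarith) (by linarith) (by linarith)
    (by linarith) (himg.symm.trans himg')
  rw [e₁, e₂]

theorem continuousOn_hRetract (hconn : (dynkin A).Connected) (hnf : ¬ IsFiniteType A) :
    ContinuousOn (fun p : ℝ × (ι → ℂ) => hRetract A hA p.1 p.2)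
      (Set.Icc (0 : ℝ) 1 ×ˢ Treg A hA) := by
  have hφ := (continuousOn_phaseI (hA := hA) hconn hnf).comp
    (s := Set.Icc (0 : ℝ) 1 ×ˢ Treg A hA) continuous_snd.continuousOn fun _ hp => hp.2
  refine (continuous_exp.comp_continuousOn ?_).smul continuous_snd.continuousOn
  exact ((continuousOn_const.mul (continuous_ofReal.comp continuous_fst).continuousOn).mul
    (continuousOn_const.sub (continuous_ofReal.comp_continuousOn hφ))).mul continuousOn_const

theorem hRetract_mem_Treg (hconn : (dynkin A).Connected) (hnf : ¬ IsFiniteType A) {t : ℝ}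
    (ht : t ∈ Set.Icc (0 : ℝ) 1) {Z : ι → ℂ} (hZ : Z ∈ Treg A hA) :
    hRetract A hA t Z ∈ Treg A hA := by
  obtain ⟨φ₁, φ₂, h₀, h₁₂, h₁, himg⟩ := exists_sector_of_mem_Treg hconn hnf hZ
  refine mem_Treg_of_image_eq_sector (smul_mem_Xreg hZ.1 (exp_ne_zero _))
    (image_pairC_hRetract himg h₀ h₁₂ h₁ t) ?_ ?_ <;> nlinarith [ht.1, ht.2]

theorem image_hRetract_one (hconn : (dynkin A).Connected) (hnf : ¬ IsFiniteType A) :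
    hRetract A hA 1 '' Treg A hA = XregN A hA := by
  refine subset_antisymm ?_ fun Z hZ =>
    ⟨Z, XregN_subset_Treg hZ, hRetract_of_phaseI_eq 1 (phaseI_of_mem_XregN hZ)⟩
  rintro _ ⟨Z, hZ, rfl⟩
  obtain ⟨φ₁, φ₂, h₀, h₁₂, h₁, himg⟩ := exists_sector_of_mem_Treg hconn hnf hZ
  exact ⟨(hRetract_mem_Treg hconn hnf ⟨zero_le_one, le_rfl⟩ hZ).1, _, _, by linarith,
    by linarith, by ring, image_pairC_hRetract himg h₀ h₁₂ h₁ 1⟩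

end Retraction

/-- `Xreg^N` is a deformation retract of `T_reg` via
`h_t(Z) = e^{iπt(1/2 - φ^I(Z))}·Z`; in particular the inclusion `Xreg^N ↪ T_reg`
is a homotopy equivalence. -/
theorem XregN_deformation_retract_Treg (A : Matrix ι ι ℤ) (hA : IsGCM A)
    (hconn : (dynkin A).Connected) (hnf : ¬ IsFiniteType A) :
    (∀ Z ∈ Treg A hA, ∃! φm : ℝ, 0 < φm ∧ φm < 1 ∧ ∃ φ₁ φ₂ : ℝ, φ₁ ≤ φ₂ ∧
        φ₂ - φ₁ < 1 ∧ (φ₁ + φ₂) / 2 = φm ∧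
        pairC Z '' (imCone A hA \ {0}) = sector φ₁ φ₂) ∧
    ContinuousOn (fun p : ℝ × (ι → ℂ) => hRetract A hA p.1 p.2)
      (Set.Icc (0 : ℝ) 1 ×ˢ Treg A hA) ∧
    (∀ Z ∈ Treg A hA, hRetract A hA 0 Z = Z) ∧
    (∀ t ∈ Set.Icc (0 : ℝ) 1, ∀ Z ∈ Treg A hA, hRetract A hA t Z ∈ Treg A hA) ∧
    (hRetract A hA 1 '' Treg A hA = XregN A hA) ∧
    XregN A hA ⊆ Treg A hA ∧
    (∀ t ∈ Set.Icc (0 : ℝ) 1, ∀ Z ∈ XregN A hA, hRetract A hA t Z = Z) :=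
  ⟨fun _ hZ => existsUnique_phase hconn hnf hZ, continuousOn_hRetract hconn hnf,
    fun Z _ => hRetract_zero Z, fun _ ht _ hZ => hRetract_mem_Treg hconn hnf ht hZ,
    image_hRetract_one hconn hnf, XregN_subset_Treg,
    fun t _ _ hZ => hRetract_of_phaseI_eq t (phaseI_of_mem_XregN hZ)⟩

end KacMoodyStab
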